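/- Let \mu_1, \mu_2 be real numbers with -1/2 < \mu_1 < \mu_2. Then for every real x, \exp_{\mu_2}(x) = (1/\beta(\mu_1+1/2, \mu_2-\mu_1)) \int_{-1}^{1} \exp_{\mu_1}(xt) |t|^{2\mu_1} (1-t)^{\mu_2-\mu_1-1} (1+t)^{\mu_2-\mu_1} \, dt. -/

import Mathlib

/-!
Expand `exp_{μ₁}(xt)` in its power series and integrate term by term, which dominated
convergence allows because the weight is integrable on `[-1, 1]`. Folding `[-1, 1]` onto `[0, 1]`
kills the odd part of `tⁿ (1 + t)`, and the substitution `u = t²` turns the `n`-th moment of the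
weight into `β(μ₁ + 1/2 + ⌈n/2⌉, μ₂ - μ₁)`. Since `Γ(a + k) = Γ(a) (a)_k` and
`γ_μ(n) = 2ⁿ ⌊n/2⌋! (μ + 1/2)_⌈n/2⌉`, this moment equals
`β(μ₁ + 1/2, μ₂ - μ₁) γ_{μ₁}(n) / γ_{μ₂}(n)`, and summing gives `β(μ₁ + 1/2, μ₂ - μ₁) exp_{μ₂}(x)`.
-/

open Finset

/-- The Dunkl generalized factorial: `γ_μ(2p+ε) = 2^(2p+ε) p! (μ+1/2)_{p+ε}`
for `ε ∈ {0,1}`. -/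
noncomputable def dunklGamma (μ : ℝ) (n : ℕ) : ℝ :=
  2 ^ n * (Nat.factorial (n / 2) : ℝ) *
    ∏ i ∈ Finset.range (n / 2 + n % 2), (μ + 1 / 2 + i)

/-- Euler's Beta function `β(x,y) = Γ(x)Γ(y)/Γ(x+y)`. -/
noncomputable def realBeta (x y : ℝ) : ℝ :=
  Real.Gamma x * Real.Gamma y / Real.Gamma (x + y)

/-- The generalized (Dunkl) exponential function `exp_μ(x) = ∑ xⁿ/γ_μ(n)`. -/
noncomputable def dunklExp (μ : ℝ) (x : ℝ) : ℝ := ∑' n : ℕ, x ^ n / dunklGamma μ n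

open MeasureTheory Set

lemma cpow_mul_one_sub_cpow_eq_ofReal {u v t : ℝ} (ht : t ∈ Icc (0:ℝ) 1) :
    (t : ℂ) ^ ((u : ℂ) - 1) * (1 - (t : ℂ)) ^ ((v : ℂ) - 1)
      = ((t ^ (u - 1) * (1 - t) ^ (v - 1) : ℝ) : ℂ) := by
  have h1t : 0 ≤ 1 - t := sub_nonneg.2 ht.2
  rw [Complex.ofReal_mul, Complex.ofReal_cpow ht.1, Complex.ofReal_cpow h1t]
  push_cast
  rfl

lemma integrableOn_rpow_mul_one_sub_rpow {u v : ℝ} (hu : 0 < u) (hv : 0 < v) :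
    IntegrableOn (fun t : ℝ => t ^ (u - 1) * (1 - t) ^ (v - 1)) (Ioo 0 1) := by
  have hc := Complex.betaIntegral_convergent (u := u) (v := v) (by simpa) (by simpa)
  rw [intervalIntegrable_iff_integrableOn_Ioo_of_le zero_le_one] at hc
  refine IntegrableOn.congr_fun hc.re (fun t ht => ?_) measurableSet_Ioo
  simp only [RCLike.re_to_complex, cpow_mul_one_sub_cpow_eq_ofReal (Ioo_subset_Icc_self ht),
    Complex.ofReal_re]

-- `realBeta` is definitionally `ProbabilityTheory.beta`.
lemma integral_rpow_mul_one_sub_rpow {u v : ℝ} (hu : 0 < u) (hv : 0 < v) :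
    ∫ t in Ioo (0:ℝ) 1, t ^ (u - 1) * (1 - t) ^ (v - 1) = realBeta u v := by
  have h := ProbabilityTheory.beta_eq_betaIntegralReal u v hu hv
  rw [Complex.betaIntegral, intervalIntegral.integral_of_le zero_le_one,
    integral_Ioc_eq_integral_Ioo,
    setIntegral_congr_fun measurableSet_Ioo
      (fun t ht => cpow_mul_one_sub_cpow_eq_ofReal (Ioo_subset_Icc_self ht)),
    integral_complex_ofReal, Complex.ofReal_re] at h
  exact h.symm

lemma sq_image_Ioo_zero_one : (fun t : ℝ => t ^ 2) '' Ioo 0 1 = Set.Ioo 0 1 := by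
  ext u
  constructor
  · rintro ⟨t, ⟨ht0, ht1⟩, rfl⟩
    exact ⟨by positivity, pow_lt_one₀ ht0.le ht1 two_ne_zero⟩
  · rintro ⟨hu0, hu1⟩
    refine ⟨√u, ⟨Real.sqrt_pos.2 hu0, ?_⟩, Real.sq_sqrt hu0.le⟩
    exact (Real.sqrt_lt' one_pos).2 (by rwa [one_pow])

lemma hasDerivWithinAt_sq_Ioo : ∀ t ∈ Ioo (0:ℝ) 1,
    HasDerivWithinAt (fun t : ℝ => t ^ 2) (2 * t) (Ioo 0 1) t := fun t _ => by
  simpa using (hasDerivAt_pow 2 t).hasDerivWithinAt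

lemma injOn_sq_Ioo : InjOn (fun t : ℝ => t ^ 2) (Ioo 0 1) := fun _ hs _ ht h =>
  (sq_eq_sq₀ hs.1.le ht.1.le).1 h

lemma abs_two_mul_smul_sq_rpow_mul_one_sub_sq_rpow {e b t : ℝ} (ht : 0 < t) :
    |2 * t| • ((t ^ 2) ^ ((e + 1) / 2 - 1) * (1 - t ^ 2) ^ (b - 1))
      = 2 * (t ^ e * (1 - t ^ 2) ^ (b - 1)) := by
  have hpow : t * (t ^ 2) ^ ((e + 1) / 2 - 1) = t ^ e := by
    rw [← Real.rpow_natCast, ← Real.rpow_mul ht.le, mul_comm, ← Real.rpow_add_one ht.ne']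
    norm_num [show (2:ℝ) * ((e + 1) / 2 - 1) + 1 = e by ring]
  rw [smul_eq_mul, abs_of_pos (by positivity), ← hpow]
  ring

lemma integrableOn_rpow_mul_one_sub_sq_rpow {e b : ℝ} (he : -1 < e) (hb : 0 < b) :
    IntegrableOn (fun t : ℝ => t ^ e * (1 - t ^ 2) ^ (b - 1)) (Ioo 0 1) := by
  have h := integrableOn_rpow_mul_one_sub_rpow (u := (e + 1) / 2) (by linarith) hb
  rw [← sq_image_Ioo_zero_one, integrableOn_image_iff_integrableOn_abs_deriv_smul
    measurableSet_Ioo hasDerivWithinAt_sq_Ioo injOn_sq_Ioo] at h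
  have h2 := h.congr_fun (fun t ht => abs_two_mul_smul_sq_rpow_mul_one_sub_sq_rpow ht.1)
    measurableSet_Ioo
  simpa [IntegrableOn] using h2.div_const 2

lemma integral_rpow_mul_one_sub_sq_rpow {e b : ℝ} (he : -1 < e) (hb : 0 < b) :
    ∫ t in Ioo (0:ℝ) 1, t ^ e * (1 - t ^ 2) ^ (b - 1) = realBeta ((e + 1) / 2) b / 2 := by
  have h := integral_image_eq_integral_abs_deriv_smul measurableSet_Ioo
    hasDerivWithinAt_sq_Ioo injOn_sq_Ioo (fun u => u ^ ((e + 1) / 2 - 1) * (1 - u) ^ (b - 1))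
  rw [sq_image_Ioo_zero_one, integral_rpow_mul_one_sub_rpow (by linarith) hb,
    setIntegral_congr_fun measurableSet_Ioo
      (fun t ht => abs_two_mul_smul_sq_rpow_mul_one_sub_sq_rpow ht.1),
    integral_const_mul] at h
  linarith

lemma intervalIntegrable_abs_rpow_mul_one_sub_sq_rpow {e b : ℝ} (he : -1 < e) (hb : 0 < b) :
    IntervalIntegrable (fun t : ℝ => |t| ^ e * (1 - t ^ 2) ^ (b - 1)) volume (-1) 1 := by
  have h01 : IntervalIntegrable (fun t : ℝ => |t| ^ e * (1 - t ^ 2) ^ (b - 1)) volume 0 1 := by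
    rw [intervalIntegrable_iff_integrableOn_Ioo_of_le zero_le_one]
    refine (integrableOn_rpow_mul_one_sub_sq_rpow he hb).congr_fun (fun t ht => ?_)
      measurableSet_Ioo
    rw [abs_of_pos ht.1]
  have h10 : IntervalIntegrable (fun t : ℝ => |t| ^ e * (1 - t ^ 2) ^ (b - 1)) volume (-1) 0 := by
    simpa using ((IntervalIntegrable.iff_comp_neg (by finiteness)).1 h01).symm
  exact h10.trans h01

lemma intervalIntegral.integral_symm_eq_integral_add_comp_neg {E : Type*}
    [NormedAddCommGroup E] [NormedSpace ℝ E] {f : ℝ → E} {a : ℝ}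
    (hf : IntervalIntegrable f volume (-a) a) :
    ∫ t in (-a)..a, f t = ∫ t in 0..a, (f t + f (-t)) := by
  have h0 : (0:ℝ) ∈ Set.uIcc (-a) a := by
    rw [Set.mem_uIcc]
    rcases le_total 0 a with h | h
    exacts [Or.inl ⟨by linarith, h⟩, Or.inr ⟨h, by linarith⟩]
  have hleft : IntervalIntegrable f volume (-a) 0 := hf.mono_set (uIcc_subset_uIcc_left h0)
  have hright : IntervalIntegrable f volume 0 a := hf.mono_set (uIcc_subset_uIcc_right h0)
  have hneg : IntervalIntegrable (fun t => f (-t)) volume 0 a := by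
    simpa using ((IntervalIntegrable.iff_comp_neg (by finiteness)).1 hleft).symm
  rw [← intervalIntegral.integral_add_adjacent_intervals hleft hright,
    intervalIntegral.integral_add hright hneg, add_comm]
  simp [intervalIntegral.integral_comp_neg]

noncomputable def dunklWeight (μ c t : ℝ) : ℝ :=
  |t| ^ (2 * μ) * (1 - t) ^ (c - 1) * (1 + t) ^ c

lemma measurable_dunklWeight (μ c : ℝ) : Measurable (dunklWeight μ c) := by
  unfold dunklWeight
  fun_prop

lemma dunklWeight_nonneg (μ c : ℝ) {t : ℝ} (ht : t ∈ Icc (-1:ℝ) 1) :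
    0 ≤ dunklWeight μ c t := by
  have h1 : 0 ≤ 1 - t := by linarith [ht.2]
  have h2 : 0 ≤ 1 + t := by linarith [ht.1]
  unfold dunklWeight
  positivity

lemma dunklWeight_eq_of_mem_Ioo (μ c : ℝ) {t : ℝ} (ht : t ∈ Ioo (-1:ℝ) 1) :
    dunklWeight μ c t = |t| ^ (2 * μ) * (1 - t ^ 2) ^ (c - 1) * (1 + t) := by
  have h1 : 0 < 1 - t := by linarith [ht.2]
  have h2 : 0 < 1 + t := by linarith [ht.1]
  rw [dunklWeight, show 1 - t ^ 2 = (1 - t) * (1 + t) by ring, Real.mul_rpow h1.le h2.le,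
    Real.rpow_sub_one h2.ne' c]
  field_simp

lemma intervalIntegrable_dunklWeight {μ c : ℝ} (hμ : -(1/2) < μ) (hc : 0 < c) :
    IntervalIntegrable (dunklWeight μ c) volume (-1) 1 := by
  have hS := intervalIntegrable_abs_rpow_mul_one_sub_sq_rpow (e := 2 * μ) (by linarith) hc
  rw [intervalIntegrable_iff_integrableOn_Ioo_of_le (by norm_num)] at hS ⊢
  refine (hS.const_mul 2).mono' (measurable_dunklWeight μ c).aestronglyMeasurable
    ((ae_restrict_iff' measurableSet_Ioo).2 (ae_of_all _ fun t ht => ?_))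
  have h2 : 1 + t ≤ 2 := by linarith [ht.2]
  rw [Real.norm_of_nonneg (dunklWeight_nonneg μ c (Ioo_subset_Icc_self ht)),
    dunklWeight_eq_of_mem_Ioo μ c ht]
  have h1 : 0 ≤ 1 - t ^ 2 := by nlinarith [ht.1, ht.2]
  exact (mul_le_mul_of_nonneg_left h2
    (mul_nonneg (by positivity) (Real.rpow_nonneg h1 _))).trans_eq (mul_comm _ _)

lemma pow_mul_one_add_add_neg_pow_mul_one_sub {R : Type*} [CommRing R] (x : R) (n : ℕ) :
    x ^ n * (1 + x) + (-x) ^ n * (1 - x) = 2 * x ^ (2 * (n / 2 + n % 2)) := by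
  obtain ⟨p, rfl | rfl⟩ := Nat.even_or_odd' n
  · rw [show 2 * p / 2 + 2 * p % 2 = p by omega, Even.neg_pow (even_two_mul p)]
    ring
  · rw [show (2 * p + 1) / 2 + (2 * p + 1) % 2 = p + 1 by omega,
      Odd.neg_pow (odd_two_mul_add_one p)]
    ring

lemma pow_mul_dunklWeight_add_neg_pow_mul_dunklWeight_neg (μ c : ℝ) (n : ℕ) {t : ℝ}
    (ht : t ∈ Ioo (0:ℝ) 1) :
    t ^ n * dunklWeight μ c t + (-t) ^ n * dunklWeight μ c (-t)
      = 2 * (t ^ ((2 * (n / 2 + n % 2) : ℕ) + 2 * μ) * (1 - t ^ 2) ^ (c - 1)) := by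
  have hmem : t ∈ Ioo (-1:ℝ) 1 := ⟨by linarith [ht.1], ht.2⟩
  have hmem' : -t ∈ Ioo (-1:ℝ) 1 := ⟨by linarith [ht.2], by linarith [ht.1]⟩
  rw [dunklWeight_eq_of_mem_Ioo μ c hmem, dunklWeight_eq_of_mem_Ioo μ c hmem', abs_neg, neg_sq,
    abs_of_pos ht.1, Real.rpow_add ht.1, Real.rpow_natCast, ← sub_eq_add_neg]
  linear_combination (t ^ (2 * μ) * (1 - t ^ 2) ^ (c - 1)) *
    pow_mul_one_add_add_neg_pow_mul_one_sub t n

lemma integral_pow_mul_dunklWeight {μ c : ℝ} (hμ : -(1/2) < μ) (hc : 0 < c) (n : ℕ) :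
    ∫ t in (-1:ℝ)..1, t ^ n * dunklWeight μ c t
      = realBeta (μ + 1/2 + (n / 2 + n % 2 : ℕ)) c := by
  have he : -1 < ((2 * (n / 2 + n % 2) : ℕ) : ℝ) + 2 * μ := by
    linarith [Nat.cast_nonneg (α := ℝ) (2 * (n / 2 + n % 2))]
  have hint : IntervalIntegrable (fun t => t ^ n * dunklWeight μ c t) volume (-1) 1 :=
    (intervalIntegrable_dunklWeight hμ hc).continuousOn_mul (continuous_pow n).continuousOn
  rw [intervalIntegral.integral_symm_eq_integral_add_comp_neg hint,
    intervalIntegral.integral_of_le zero_le_one, integral_Ioc_eq_integral_Ioo,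
    setIntegral_congr_fun measurableSet_Ioo
      (fun t ht => pow_mul_dunklWeight_add_neg_pow_mul_dunklWeight_neg μ c n ht),
    integral_const_mul, integral_rpow_mul_one_sub_sq_rpow he hc,
    mul_div_cancel₀ _ two_ne_zero]
  congr 1
  push_cast
  ring

lemma Real.Gamma_add_nat_eq_mul_prod {a : ℝ} (ha : 0 < a) (k : ℕ) :
    Real.Gamma (a + k) = Real.Gamma a * ∏ i ∈ range k, (a + i) := by
  induction k with
  | zero => simp
  | succ k ih =>
    rw [Nat.cast_succ, ← add_assoc, Real.Gamma_add_one (by positivity), ih, prod_range_succ]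
    ring

lemma dunklGamma_two_mul (μ : ℝ) (p : ℕ) :
    dunklGamma μ (2 * p) = 2 ^ (2 * p) * p.factorial * ∏ i ∈ range p, (μ + 1/2 + i) := by
  rw [dunklGamma, show 2 * p / 2 + 2 * p % 2 = p by omega, show 2 * p / 2 = p by omega]

lemma dunklGamma_two_mul_add_one (μ : ℝ) (p : ℕ) :
    dunklGamma μ (2 * p + 1)
      = 2 ^ (2 * p + 1) * p.factorial * ∏ i ∈ range (p + 1), (μ + 1/2 + i) := by
  rw [dunklGamma, show (2 * p + 1) / 2 + (2 * p + 1) % 2 = p + 1 by omega,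
    show (2 * p + 1) / 2 = p by omega]

lemma dunklGamma_two_mul_add_one_eq_mul (μ : ℝ) (p : ℕ) :
    dunklGamma μ (2 * p + 1) = (2 * p + 1 + 2 * μ) * dunklGamma μ (2 * p) := by
  rw [dunklGamma_two_mul_add_one, dunklGamma_two_mul, prod_range_succ, pow_succ]
  ring

lemma dunklGamma_two_mul_add_two_eq_mul (μ : ℝ) (p : ℕ) :
    dunklGamma μ (2 * p + 2) = (2 * p + 2) * dunklGamma μ (2 * p + 1) := by
  rw [show 2 * p + 2 = 2 * (p + 1) by ring, dunklGamma_two_mul, dunklGamma_two_mul_add_one,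
    Nat.factorial_succ]
  push_cast
  ring

lemma dunklGamma_pos {μ : ℝ} (hμ : -(1/2) < μ) (n : ℕ) : 0 < dunklGamma μ n := by
  refine mul_pos (by positivity) (prod_pos fun i _ => ?_)
  linarith [Nat.cast_nonneg (α := ℝ) i]

lemma natCast_mul_dunklGamma_le_succ {μ : ℝ} (hμ : -(1/2) < μ) (n : ℕ) :
    n * dunklGamma μ n ≤ dunklGamma μ (n + 1) := by
  have hpos := dunklGamma_pos hμ n
  obtain ⟨p, rfl | rfl⟩ := Nat.even_or_odd' n
  · rw [dunklGamma_two_mul_add_one_eq_mul]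
    push_cast
    exact mul_le_mul_of_nonneg_right (by linarith) hpos.le
  · rw [dunklGamma_two_mul_add_two_eq_mul]
    push_cast
    exact mul_le_mul_of_nonneg_right (by linarith) hpos.le

lemma summable_pow_div_dunklGamma {μ : ℝ} (hμ : -(1/2) < μ) (y : ℝ) :
    Summable fun n => y ^ n / dunklGamma μ n := by
  refine summable_of_ratio_norm_eventually_le (r := 1/2) (by norm_num) ?_
  filter_upwards [Filter.eventually_ge_atTop ⌈2 * |y|⌉₊] with n hn
  have hγ := dunklGamma_pos hμ n
  have hy : 2 * |y| ≤ n := Nat.ceil_le.1 hn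
  rw [norm_div, norm_div, norm_pow, norm_pow, Real.norm_eq_abs, Real.norm_of_nonneg hγ.le,
    Real.norm_of_nonneg (dunklGamma_pos hμ (n + 1)).le, div_le_iff₀ (dunklGamma_pos hμ (n + 1)),
    pow_succ]
  calc |y| ^ n * |y| = 1/2 * (|y| ^ n / dunklGamma μ n) * (2 * |y| * dunklGamma μ n) := by
        field_simp
    _ ≤ 1/2 * (|y| ^ n / dunklGamma μ n) * (n * dunklGamma μ n) := by gcongr
    _ ≤ 1/2 * (|y| ^ n / dunklGamma μ n) * dunklGamma μ (n + 1) := by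
        gcongr
        exact natCast_mul_dunklGamma_le_succ hμ n

lemma dunklGamma_mul_Gamma {μ : ℝ} (hμ : -(1/2) < μ) (n : ℕ) :
    dunklGamma μ n * Real.Gamma (μ + 1/2)
      = 2 ^ n * (n / 2).factorial * Real.Gamma (μ + 1/2 + (n / 2 + n % 2 : ℕ)) := by
  rw [Real.Gamma_add_nat_eq_mul_prod (by linarith), dunklGamma]
  ring

lemma dunklGamma_mul_realBeta {μ ν : ℝ} (hμ : -(1/2) < μ) (hμν : μ < ν) (n : ℕ) :
    dunklGamma μ n * realBeta (μ + 1/2) (ν - μ)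
      = dunklGamma ν n * realBeta (μ + 1/2 + (n / 2 + n % 2 : ℕ)) (ν - μ) := by
  have hμ' := dunklGamma_mul_Gamma hμ n
  have hν' := dunklGamma_mul_Gamma (hμ.trans hμν) n
  set k : ℕ := n / 2 + n % 2
  have hΓν : Real.Gamma (ν + 1/2) ≠ 0 := (Real.Gamma_pos_of_pos (by linarith)).ne'
  have hΓνk : Real.Gamma (ν + 1/2 + k) ≠ 0 :=
    (Real.Gamma_pos_of_pos (by linarith [Nat.cast_nonneg (α := ℝ) k])).ne'
  rw [realBeta, realBeta, show μ + 1/2 + (ν - μ) = ν + 1/2 by ring,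
    show μ + 1/2 + k + (ν - μ) = ν + 1/2 + k by ring, mul_div_assoc', mul_div_assoc',
    div_eq_div_iff hΓν hΓνk]
  linear_combination Real.Gamma (ν - μ) * Real.Gamma (ν + 1/2 + k) * hμ'
    - Real.Gamma (μ + 1/2 + k) * Real.Gamma (ν - μ) * hν'

lemma hasSum_integral_dunklExp_mul {μ : ℝ} (hμ : -(1/2) < μ) {g : ℝ → ℝ}
    (hg : IntervalIntegrable g volume (-1) 1) (x : ℝ) :
    HasSum (fun n => x ^ n / dunklGamma μ n * ∫ t in (-1:ℝ)..1, t ^ n * g t)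
      (∫ t in (-1:ℝ)..1, dunklExp μ (x * t) * g t) := by
  simp_rw [← intervalIntegral.integral_const_mul]
  have hg_meas := hg.def'.aestronglyMeasurable
  refine intervalIntegral.hasSum_integral_of_dominated_convergence
    (fun n t => |x| ^ n / dunklGamma μ n * |g t|)
    (fun n => by fun_prop)
    (fun n => ae_of_all _ fun t ht => ?_)
    (ae_of_all _ fun t _ => (summable_pow_div_dunklGamma hμ |x|).mul_right |g t|) ?_
    (ae_of_all _ fun t _ => ?_)
  · rw [Set.uIoc_of_le (by norm_num)] at ht
    have ht' : |t| ≤ 1 := abs_le.2 ⟨ht.1.le, ht.2⟩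
    simp only [norm_mul, norm_div, norm_pow, Real.norm_eq_abs, abs_of_pos (dunklGamma_pos hμ n)]
    exact mul_le_mul_of_nonneg_left
      (mul_le_of_le_one_left (abs_nonneg _) (pow_le_one₀ (abs_nonneg t) ht'))
      (div_nonneg (by positivity) (dunklGamma_pos hμ n).le)
  · simp_rw [tsum_mul_right]
    exact hg.abs.const_mul _
  · have hterm : (fun n => x ^ n / dunklGamma μ n * (t ^ n * g t))
        = fun n => (x * t) ^ n / dunklGamma μ n * g t := funext fun n => by ring
    rw [hterm]
    exact (summable_pow_div_dunklGamma hμ (x * t)).hasSum.mul_right (g t)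

/-- integral representation of the generalized exponential:
for `-1/2 < μ₁ < μ₂` and every real `x`,
`exp_{μ₂}(x) = (1/β(μ₁+1/2, μ₂-μ₁)) ∫_{-1}^{1} exp_{μ₁}(xt) |t|^{2μ₁}
  (1-t)^{μ₂-μ₁-1} (1+t)^{μ₂-μ₁} dt`. -/
theorem dunklExp_integral_rep
    (μ1 μ2 : ℝ) (h1 : -(1/2) < μ1) (h2 : μ1 < μ2) (x : ℝ) :
    dunklExp μ2 x =
      (realBeta (μ1 + 1/2) (μ2 - μ1))⁻¹ *
        ∫ t in (-1:ℝ)..1,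
          dunklExp μ1 (x * t) * |t| ^ (2 * μ1) * (1 - t) ^ (μ2 - μ1 - 1) *
            (1 + t) ^ (μ2 - μ1) := by
  have hc : 0 < μ2 - μ1 := sub_pos.2 h2
  have hβ : realBeta (μ1 + 1/2) (μ2 - μ1) ≠ 0 :=
    (ProbabilityTheory.beta_pos (by linarith) hc).ne'
  have hterm (n : ℕ) :
      x ^ n / dunklGamma μ1 n * ∫ t in (-1:ℝ)..1, t ^ n * dunklWeight μ1 (μ2 - μ1) t
        = realBeta (μ1 + 1/2) (μ2 - μ1) * (x ^ n / dunklGamma μ2 n) := by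
    rw [integral_pow_mul_dunklWeight h1 hc, div_mul_eq_mul_div, mul_div_assoc',
      div_eq_div_iff (dunklGamma_pos h1 n).ne' (dunklGamma_pos (h1.trans h2) n).ne']
    linear_combination x ^ n * (dunklGamma_mul_realBeta h1 h2 n).symm
  have hsum := hasSum_integral_dunklExp_mul h1 (intervalIntegrable_dunklWeight h1 hc) x
  simp only [hterm] at hsum
  simp only [dunklWeight, ← mul_assoc] at hsum
  rw [← hsum.tsum_eq, tsum_mul_left, inv_mul_cancel_left₀ hβ, dunklExp]
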